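/- Let F be a finite family of functions f : X → {0,1} on finite nonempty X, L : X → {0,1}, and suppose no pointwise majority of any k functions from F equals L on all of X, where k = ⌈ln|X|/(2δ²)⌉ + 1. Then the value of the misclassification game (payoff 1 iff f(x) ≠ L(x), F minimizing) is strictly greater than 1/2 − δ. -/

import Mathlib

open Finset
open scoped Classical

open MeasureTheory ProbabilityTheory Real

/-!
Let `p` be a mixed strategy whose error is at most `1/2 - γ` at every point, and draw `k`
classifiers independently from `p`. At a fixed point the fraction of correct votes has mean at
least `1/2 + γ`, so by Hoeffding's inequality the majority vote errs there with probability
at most `exp (-2 γ² k)`. If `|X| exp (-2 γ² k) < 1`, the union bound yields a draw whose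
majority is correct everywhere. Hence, when no majority of `k` classifiers computes `L`, every mixed strategy
has worst-case error at least `1/2 - √(ln |X| / (2k))`, and the choice of `k` makes this
exceed `1/2 - δ`.
-/

theorem measureReal_two_mul_card_mem_le_le_exp {Ω : Type*} [MeasurableSpace Ω] (ν : Measure Ω)
    [IsProbabilityMeasure ν] {s : Set Ω} (hs : MeasurableSet s) {γ : ℝ} (hγ : 0 ≤ γ)
    (hνs : 1 / 2 + γ ≤ ν.real s) (k : ℕ) :
    (Measure.pi fun _ : Fin k => ν).real {ω | 2 * #{m | ω m ∈ s} ≤ k} ≤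
      exp (-(2 * γ ^ 2 * k)) := by
  set μ := Measure.pi fun _ : Fin k => ν
  set h : Ω → ℝ := fun i => ν.real s - s.indicator 1 i
  have h_meas : Measurable fun i => -s.indicator (1 : Ω → ℝ) i :=
    (measurable_const.indicator hs).neg
  have h_indep : iIndepFun (fun m ω => h (ω m)) μ :=
    iIndepFun_pi fun _ => (h_meas.const_add _).aemeasurable
  have h_subG (m : Fin k) : HasSubgaussianMGF (fun ω => h (ω m)) (1 / 4) μ := by
    have h_int : ∫ ω, -s.indicator (1 : Ω → ℝ) (ω m) ∂μ = -ν.real s := by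
      rw [← integral_indicator_one hs, ← integral_neg]
      exact integral_comp_eval (μ := fun _ => ν) (i := m) h_meas.aestronglyMeasurable
    have := hasSubgaussianMGF_of_mem_Icc (μ := μ) (X := fun ω => -s.indicator 1 (ω m))
      (a := -1) (b := 0) (h_meas.comp (measurable_pi_apply m)).aemeasurable
      (ae_of_all _ fun ω => by by_cases hω : ω m ∈ s <;> simp [hω])
    convert this using 1
    · funext ω
      simp only [h, h_int]
      ring
    · norm_num
  have h_event :
      {ω : Fin k → Ω | 2 * #{m | ω m ∈ s} ≤ k} ⊆ {ω | k * γ ≤ ∑ m, h (ω m)} := by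
    intro ω hω
    have h_card : ∑ m, s.indicator (1 : Ω → ℝ) (ω m) = #{m | ω m ∈ s} := by
      simp [Set.indicator_apply, Finset.sum_boole]
    have hω' : 2 * (#{m | ω m ∈ s} : ℝ) ≤ k := by exact_mod_cast hω
    simp only [Set.mem_ofPred_eq, h, Finset.sum_sub_distrib, h_card, Finset.sum_const,
      Finset.card_univ, Fintype.card_fin, nsmul_eq_mul]
    nlinarith
  calc μ.real {ω | 2 * #{m | ω m ∈ s} ≤ k}
      ≤ μ.real {ω | k * γ ≤ ∑ m, h (ω m)} := measureReal_mono h_event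
    _ ≤ exp (-(k * γ) ^ 2 / (2 * ((∑ _m : Fin k, 1 / 4 : NNReal) : ℝ))) :=
        HasSubgaussianMGF.measure_sum_ge_le_of_iIndepFun h_indep (fun m _ => h_subG m)
          (by positivity)
    _ = exp (-(2 * γ ^ 2 * k)) := by
        rcases Nat.eq_zero_or_pos k with rfl | hk
        · simp
        · congr 1
          push_cast
          simp only [Finset.sum_const, Finset.card_univ, Fintype.card_fin, nsmul_eq_mul]
          field_simp
          ring

theorem two_mul_sq_mul_le_log_card {Ω X : Type*} [MeasurableSpace Ω] [Fintype X]
    (ν : Measure Ω) [IsProbabilityMeasure ν] {s : X → Set Ω} (hs : ∀ x, MeasurableSet (s x))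
    {γ : ℝ} (hγ : 0 ≤ γ) (hνs : ∀ x, 1 / 2 + γ ≤ ν.real (s x)) (k : ℕ)
    (hcover : ∀ ω : Fin k → Ω, ∃ x, 2 * #{m | ω m ∈ s x} ≤ k) :
    2 * γ ^ 2 * k ≤ log (Fintype.card X) := by
  set μ := Measure.pi fun _ : Fin k => ν
  have h_union : (Set.univ : Set (Fin k → Ω)) = ⋃ x, {ω | 2 * #{m | ω m ∈ s x} ≤ k} := by
    ext ω
    simpa using hcover ω
  have h_le : 1 ≤ Fintype.card X * exp (-(2 * γ ^ 2 * k)) :=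
    calc (1 : ℝ) = μ.real Set.univ := probReal_univ.symm
      _ ≤ ∑ x, μ.real {ω | 2 * #{m | ω m ∈ s x} ≤ k} :=
          h_union ▸ measureReal_iUnion_fintype_le _
      _ ≤ ∑ _x : X, exp (-(2 * γ ^ 2 * k)) :=
          Finset.sum_le_sum fun x _ =>
            measureReal_two_mul_card_mem_le_le_exp ν (hs x) hγ (hνs x) k
      _ = Fintype.card X * exp (-(2 * γ ^ 2 * k)) := by simp
  have h_exp : exp (2 * γ ^ 2 * k) ≤ Fintype.card X := by
    rwa [exp_neg, ← div_eq_mul_inv, one_le_div (exp_pos _)] at h_le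
  exact (le_log_iff_exp_le ((exp_pos _).trans_le h_exp)).2 h_exp

noncomputable def PMF.ofStdSimplex {ι : Type*} [Fintype ι] (p : stdSimplex ℝ ι) : PMF ι :=
  PMF.ofFintype (fun i => ENNReal.ofReal (p.1 i)) (by
    rw [← ENNReal.ofReal_sum_of_nonneg fun i _ => p.2.1 i, p.2.2, ENNReal.ofReal_one])

theorem PMF.toMeasure_ofStdSimplex_real {ι : Type*} [Fintype ι] [MeasurableSpace ι]
    [MeasurableSingletonClass ι] (p : stdSimplex ℝ ι) (P : ι → Prop) [DecidablePred P] :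
    (PMF.ofStdSimplex p).toMeasure.real {i | P i} = ∑ i, p.1 i * if P i then 1 else 0 := by
  rw [measureReal_def, PMF.toMeasure_apply_fintype, ENNReal.toReal_sum fun i _ => ?_]
  · refine Finset.sum_congr rfl fun i _ => ?_
    by_cases hi : P i <;> simp [PMF.ofStdSimplex, hi, p.2.1 i]
  · by_cases hi : P i <;> simp [PMF.ofStdSimplex, hi]

theorem half_sub_sqrt_le_iSup_error {ι X β : Type*} [Fintype ι] [MeasurableSpace ι]
    [MeasurableSingletonClass ι] [Fintype X] [DecidableEq β] (c : ι → X → β) (L : X → β)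
    {k : ℕ} (hk : 0 < k)
    (hmaj : ∀ S : Fin k → ι, ∃ x, 2 * #{m | c (S m) x = L x} ≤ k) (p : stdSimplex ℝ ι) :
    1 / 2 - sqrt (log (Fintype.card X) / (2 * k)) ≤
      ⨆ x, ∑ i, p.1 i * if c i x ≠ L x then 1 else 0 := by
  set V := ⨆ x, ∑ i, p.1 i * if c i x ≠ L x then (1 : ℝ) else 0
  rcases le_or_gt (1 / 2 - V) 0 with hV | hV
  · linarith [sqrt_nonneg (log (Fintype.card X) / (2 * k))]
  set ν := (PMF.ofStdSimplex p).toMeasure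
  have h_correct (x : X) : 1 / 2 + (1 / 2 - V) ≤ ν.real {i | c i x = L x} := by
    have h_error : ν.real {i | c i x = L x}ᶜ ≤ V := by
      rw [Set.compl_ofPred, PMF.toMeasure_ofStdSimplex_real]
      exact Finite.le_ciSup_of_le x le_rfl
    rw [probReal_compl_eq_one_sub (Set.toFinite {i | c i x = L x}).measurableSet] at h_error
    linarith
  have h_log := two_mul_sq_mul_le_log_card ν (fun x => (Set.toFinite _).measurableSet) hV.le
    h_correct k fun S => (hmaj S).imp fun x hx => by simpa only [Set.mem_ofPred_eq] using hx
  rw [sub_le_comm, le_sqrt' hV, le_div_iff₀ (by positivity)]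
  linarith

theorem no_majority_lower_bounds_value_general {X : Type*} [Fintype X]
    (F : Finset (X → Bool)) (hF : F.Nonempty) (L : X → Bool)
    (δ : ℝ) (hδ : 0 < δ)
    (k : ℕ) (hkdef : k = ⌈Real.log (Fintype.card X) / (2 * δ ^ 2)⌉₊ + 1)
    (hmaj : ∀ S : Fin k → ↥F, ∃ x : X,
      ¬ (k < 2 * (univ.filter fun m : Fin k => (S m).1 x = L x).card)) :
    1 / 2 - δ < ⨅ p : stdSimplex ℝ ↥F, ⨆ x : X,
      ∑ f : ↥F, p.1 f * (if f.1 x ≠ L x then (1 : ℝ) else 0) := by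
  have hk : 0 < k := hkdef ▸ Nat.succ_pos _
  have h_sqrt : sqrt (log (Fintype.card X) / (2 * k)) < δ := by
    have h_ceil : log (Fintype.card X) / (2 * δ ^ 2) < k := by
      rw [hkdef, Nat.cast_succ]
      exact (Nat.le_ceil _).trans_lt (lt_add_one _)
    rw [sqrt_lt' hδ, div_lt_iff₀ (by positivity)]
    rw [div_lt_iff₀ (by positivity)] at h_ceil
    linarith
  obtain ⟨f, hf⟩ := hF
  have : Nonempty (stdSimplex ℝ ↥F) := ⟨⟨_, single_mem_stdSimplex ℝ ⟨f, hf⟩⟩⟩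
  refine (sub_lt_sub_left h_sqrt _).trans_le (le_ciInf fun p => ?_)
  exact half_sub_sqrt_le_iSup_error (fun f : ↥F => f.1) L hk
    (fun S => (hmaj S).imp fun _ => not_lt.1) p

theorem no_majority_lower_bounds_value {X : Type*} [Fintype X] [Nonempty X]
    (F : Finset (X → Bool)) (hF : F.Nonempty) (L : X → Bool)
    (δ : ℝ) (hδ : 0 < δ)
    (k : ℕ) (hkdef : k = ⌈Real.log (Fintype.card X) / (2 * δ ^ 2)⌉₊ + 1)
    (hmaj : ∀ S : Fin k → ↥F, ∃ x : X,
      ¬ (k < 2 * (univ.filter fun m : Fin k => (S m).1 x = L x).card)) :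
    1 / 2 - δ < ⨅ p : stdSimplex ℝ ↥F, ⨆ x : X,
      ∑ f : ↥F, p.1 f * (if f.1 x ≠ L x then (1 : ℝ) else 0) :=
  no_majority_lower_bounds_value_general F hF L δ hδ k hkdef hmaj
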